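/- arXiv:0906.1001 — 2 statements merged into one kernel-verified Lean document; each statement's English description precedes it below -/
import Mathlib

section
/- Let ℓ ≥ 1 and N be integers with 2^N ≥ 8ℓ + 3. Then the 2-adic valuation of the binomial coefficient C(2^N − 4(ℓ+1), 4ℓ−2) equals α(ℓ−1) + 2; in particular, if α(ℓ) ≥ 2 then this 2-adic valuation is at least 3. -/
/-!
Kummer's theorem gives `ν(C(a, b)) = α(b) + α(a - b) - α(a)`. With `a = 2^N - 4(ℓ+1)` and
`a - b = 2^N - (8ℓ+2)`, the complement identity `α(2^N - m) = N - α(m - 1)` turns the two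
`α`-values into `N - α(4ℓ+3) = N - α(ℓ) - 2` and `N - α(8ℓ+1) = N - α(ℓ) - 1`, while
`α(4ℓ - 2) = α(2(ℓ-1) + 1) = α(ℓ-1) + 1`; the `N` and the `α(ℓ)` cancel.
-/

/-- `α n` = number of ones in the binary expansion of `n` (with `α 0 = 0`). -/
def binaryOnes (n : ℕ) : ℕ := (Nat.digits 2 n).sum

lemma binaryOnes_two_mul (n : ℕ) : binaryOnes (2 * n) = binaryOnes n := by
  rcases Nat.eq_zero_or_pos n with rfl | hn
  · rfl
  · rw [binaryOnes, Nat.digits_def' one_lt_two (by omega)]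
    simp [binaryOnes]

lemma binaryOnes_two_mul_add_one (n : ℕ) : binaryOnes (2 * n + 1) = binaryOnes n + 1 := by
  rw [binaryOnes, Nat.digits_def' one_lt_two (by omega), List.sum_cons,
    Nat.mul_add_mod_self_left, Nat.mul_add_div two_pos]
  simp [binaryOnes, add_comm]

lemma binaryOnes_pos {n : ℕ} (hn : n ≠ 0) : 0 < binaryOnes n :=
  (Nat.pos_of_ne_zero (Nat.getLast_digit_ne_zero 2 hn)).trans_le
    (List.le_sum_of_mem (List.getLast_mem _))

lemma binaryOnes_two_pow_sub_one_sub_add (N : ℕ) :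
    ∀ t < 2 ^ N, binaryOnes (2 ^ N - 1 - t) + binaryOnes t = N := by
  induction N with
  | zero => intro t ht; simp [Nat.lt_one_iff.mp ht, binaryOnes]
  | succ N ih =>
    intro t ht
    obtain ⟨k, rfl | rfl⟩ := Nat.even_or_odd' t
    · have hk := ih k (by omega)
      rw [show 2 ^ (N + 1) - 1 - 2 * k = 2 * (2 ^ N - 1 - k) + 1 by omega,
        binaryOnes_two_mul_add_one, binaryOnes_two_mul]
      omega
    · have hk := ih k (by omega)
      rw [show 2 ^ (N + 1) - 1 - (2 * k + 1) = 2 * (2 ^ N - 1 - k) by omega,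
        binaryOnes_two_mul, binaryOnes_two_mul_add_one]
      omega

lemma binaryOnes_two_pow_sub_add {N m : ℕ} (hm : 1 ≤ m) (hmN : m ≤ 2 ^ N) :
    binaryOnes (2 ^ N - m) + binaryOnes (m - 1) = N := by
  rw [show 2 ^ N - m = 2 ^ N - 1 - (m - 1) by omega]
  exact binaryOnes_two_pow_sub_one_sub_add N (m - 1) (by omega)

lemma padicValNat_two_choose {n k : ℕ} (h : k ≤ n) :
    padicValNat 2 (n.choose k) = binaryOnes k + binaryOnes (n - k) - binaryOnes n := by
  have := sub_one_mul_padicValNat_choose_eq_sub_sum_digits (p := 2) h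
  rwa [Nat.add_one_sub_one, one_mul] at this

theorem stmt_16 (ℓ N : ℕ) (hℓ : 1 ≤ ℓ) (hN : 8 * ℓ + 3 ≤ 2 ^ N) :
    padicValNat 2 (Nat.choose (2 ^ N - 4 * (ℓ + 1)) (4 * ℓ - 2)) = binaryOnes (ℓ - 1) + 2 ∧
    (2 ≤ binaryOnes ℓ →
      3 ≤ padicValNat 2 (Nat.choose (2 ^ N - 4 * (ℓ + 1)) (4 * ℓ - 2))) := by
  have hν := padicValNat_two_choose (show 4 * ℓ - 2 ≤ 2 ^ N - 4 * (ℓ + 1) by omega)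
  have hb : binaryOnes (4 * ℓ - 2) = binaryOnes (ℓ - 1) + 1 := by
    rw [show 4 * ℓ - 2 = 2 * (2 * (ℓ - 1) + 1) by omega, binaryOnes_two_mul,
      binaryOnes_two_mul_add_one]
  have ha : binaryOnes (2 ^ N - 4 * (ℓ + 1)) + (binaryOnes ℓ + 2) = N := by
    have h := binaryOnes_two_pow_sub_add (N := N) (m := 4 * (ℓ + 1)) (by omega) (by omega)
    rwa [show 4 * (ℓ + 1) - 1 = 2 * (2 * ℓ + 1) + 1 by omega, binaryOnes_two_mul_add_one,
      binaryOnes_two_mul_add_one, add_assoc] at h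
  have hab : binaryOnes (2 ^ N - 4 * (ℓ + 1) - (4 * ℓ - 2)) + (binaryOnes ℓ + 1) = N := by
    have h := binaryOnes_two_pow_sub_add (N := N) (m := 8 * ℓ + 2) (by omega) (by omega)
    rwa [show 8 * ℓ + 2 - 1 = 2 * (2 * (2 * ℓ)) + 1 by omega, binaryOnes_two_mul_add_one,
      binaryOnes_two_mul, binaryOnes_two_mul, show 2 ^ N - (8 * ℓ + 2) =
        2 ^ N - 4 * (ℓ + 1) - (4 * ℓ - 2) by omega] at h
  refine ⟨by omega, fun hα => ?_⟩
  have hℓ1 : ℓ - 1 ≠ 0 := by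
    rintro h
    rw [show ℓ = 1 by omega] at hα
    exact absurd hα (by decide)
  have := binaryOnes_pos hℓ1
  omega
end

section
/- Let ℓ ≥ 1 and N be integers with 2^N ≥ 8(ℓ + 1). Then the 2-adic valuation of the binomial coefficient C(2^N − 4(ℓ+1), 4ℓ−4) equals α(ℓ) − 1. -/
lemma binaryOnes_two_mul_add (m r : ℕ) (hr : r < 2) :
    binaryOnes (2 * m + r) = binaryOnes m + r := by
  rcases Nat.eq_zero_or_pos (2 * m + r) with h | h
  · obtain ⟨rfl, rfl⟩ : m = 0 ∧ r = 0 := by omega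
    rfl
  · rw [binaryOnes, Nat.digits_def' one_lt_two h, List.sum_cons,
      show (2 * m + r) % 2 = r by omega, show (2 * m + r) / 2 = m by omega, add_comm]
    rfl

lemma binaryOnes_two_pow_mul (k m : ℕ) : binaryOnes (2 ^ k * m) = binaryOnes m := by
  rcases Nat.eq_zero_or_pos m with rfl | hm
  · simp
  · simp [binaryOnes, Nat.digits_base_pow_mul one_lt_two hm]

lemma binaryOnes_pos_s17 {m : ℕ} (hm : 0 < m) : 0 < binaryOnes m := by
  rw [binaryOnes, Nat.pos_iff_ne_zero, Ne, List.sum_eq_zero_iff]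
  exact fun h ↦ Nat.getLast_digit_ne_zero 2 hm.ne' (h _ (List.getLast_mem _))

lemma binaryOnes_two_pow_sub_one_sub_add_s17 (M : ℕ) {b : ℕ} (hb : b < 2 ^ M) :
    binaryOnes (2 ^ M - 1 - b) + binaryOnes b = M := by
  induction M generalizing b with
  | zero =>
    obtain rfl : b = 0 := by simpa using hb
    rfl
  | succ M ih =>
    have hpow : 2 ^ (M + 1) = 2 * 2 ^ M := pow_succ' 2 M
    obtain ⟨q, r, hr, rfl⟩ : ∃ q r, r < 2 ∧ b = 2 * q + r := ⟨b / 2, b % 2, by omega, by omega⟩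
    have hcompl : 2 ^ (M + 1) - 1 - (2 * q + r) = 2 * (2 ^ M - 1 - q) + (1 - r) := by omega
    rw [hcompl, binaryOnes_two_mul_add _ _ (by omega), binaryOnes_two_mul_add _ _ hr]
    have := ih (b := q) (by omega)
    omega

theorem stmt_17 (ℓ N : ℕ) (hℓ : 1 ≤ ℓ) (hN : 8 * (ℓ + 1) ≤ 2 ^ N) :
    padicValNat 2 (Nat.choose (2 ^ N - 4 * (ℓ + 1)) (4 * ℓ - 4)) = binaryOnes ℓ - 1 := by
  obtain ⟨M, rfl⟩ : ∃ M, N = M + 3 := by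
    refine ⟨N - 3, (Nat.sub_add_cancel ?_).symm⟩
    by_contra! h
    interval_cases N <;> omega
  have hpow : 2 ^ (M + 3) = 8 * 2 ^ M := by ring
  have hpow' : 2 ^ (M + 1) = 2 * 2 ^ M := by ring
  have hn : 2 ^ (M + 3) - 4 * (ℓ + 1) = 2 ^ 2 * (2 ^ (M + 1) - 1 - ℓ) := by omega
  have hk : 4 * ℓ - 4 = 2 ^ 2 * (ℓ - 1) := by omega
  have hnk : 2 ^ 2 * (2 ^ (M + 1) - 1 - ℓ) - 2 ^ 2 * (ℓ - 1) = 2 ^ 3 * (2 ^ M - 1 - (ℓ - 1)) := by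
    omega
  rw [hn, hk, padicValNat_two_choose (by omega), hnk, binaryOnes_two_pow_mul,
    binaryOnes_two_pow_mul, binaryOnes_two_pow_mul]
  have hlow := binaryOnes_two_pow_sub_one_sub_add_s17 M (b := ℓ - 1) (by omega)
  have hhigh := binaryOnes_two_pow_sub_one_sub_add_s17 (M + 1) (b := ℓ) (by omega)
  have := binaryOnes_pos_s17 hℓ
  omega
end
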